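/- Let X be an exchangeable random network on a finite node set N and let x be a simple graph on N. Then P(X = x) = Σ_{U} (−1)^{|U| − |x|} r_U(x) z_U, where the sum runs over all isomorphism classes U of graphs on N, |U| is the number of edges of U, |x| is the number of edges of x, r_U(x) is the number of labeled graphs on N in the isomorphism class of U that contain x as a subgraph, and z_U = P(B ⊆ X) for any (equivalently, every) labeled graph B on N in the isomorphism class of U. -/
import Mathlib


open MeasureTheory
open scoped Classical

/-- The type of dyads over a node set `V`: unordered pairs of distinct nodes. -/
abbrev Dyad (V : Type*) : Type _ := {d : Sym2 V // ¬ d.IsDiag}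

/-- The action of a permutation of the node set on dyads. -/
def dyadPerm {V : Type*} (π : Equiv.Perm V) (d : Dyad V) : Dyad V :=
  ⟨d.1.map π, by rw [Sym2.isDiag_map (Equiv.injective π)]; exact d.2⟩

lemma dyadPerm_one {V : Type*} (d : Dyad V) : dyadPerm 1 d = d := by
  apply Subtype.ext
  simp [dyadPerm, Sym2.map_id']

lemma dyadPerm_mul {V : Type*} (π σ : Equiv.Perm V) (d : Dyad V) :
    dyadPerm π (dyadPerm σ d) = dyadPerm (π * σ) d := by
  apply Subtype.ext
  simp [dyadPerm, Sym2.map_map]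

/-- Two edge sets are equivalent iff some relabeling of the nodes carries one to the
other, i.e. iff their associated graphs (without isolated vertices) are isomorphic. -/
def isoSetoid (V : Type*) [Fintype V] [DecidableEq V] : Setoid (Finset (Dyad V)) where
  r B B' := ∃ π : Equiv.Perm V, B.image (dyadPerm π) = B'
  iseqv := by
    constructor
    · intro B
      refine ⟨1, ?_⟩
      rw [Finset.image_congr (fun x _ => dyadPerm_one x)]
      exact Finset.image_id
    · rintro B B' ⟨π, rfl⟩
      refine ⟨π⁻¹, ?_⟩
      rw [Finset.image_image]
      rw [Finset.image_congr (g := id) (fun x _ => by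
        simp only [Function.comp_apply, dyadPerm_mul, inv_mul_cancel, dyadPerm_one, id])]
      exact Finset.image_id
    · rintro B B' B'' ⟨π, rfl⟩ ⟨σ, rfl⟩
      refine ⟨σ * π, ?_⟩
      rw [Finset.image_image]
      exact Finset.image_congr (fun x _ => (dyadPerm_mul σ π x).symm)

/-- The isomorphism classes of graphs on the node set `V` (graphs identified with
their edge sets). -/
abbrev IsoClass (V : Type*) [Fintype V] [DecidableEq V] := Quotient (isoSetoid V)

/-- `rCount U A`: the number of labeled graphs on `V` in the isomorphism class `U`
that contain the graph with edge set `A` as a subgraph. -/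
noncomputable def rCount {V : Type*} [Fintype V] [DecidableEq V]
    (U : IsoClass V) (A : Finset (Dyad V)) : ℕ :=
  Nat.card {B : Finset (Dyad V) // Quotient.mk (isoSetoid V) B = U ∧ A ⊆ B}

/-- A random network `X = (X_d, d ∈ D(N))` is exchangeable if its joint distribution
is invariant under every relabeling of the node set. -/
def IsExchangeable {V Ω : Type*} [MeasurableSpace Ω] (μ : Measure Ω)
    (X : Dyad V → Ω → Bool) : Prop :=
  ∀ (π : Equiv.Perm V) (f : Dyad V → Bool),
    μ {ω | ∀ d : Dyad V, X (dyadPerm π d) ω = f d} = μ {ω | ∀ d : Dyad V, X d ω = f d}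


section Aux

variable {V Ω : Type*} [Fintype V] [DecidableEq V] [MeasurableSpace Ω]

/-- `dyadPerm π` as an equivalence. -/
def dyadEquiv {V : Type*} (π : Equiv.Perm V) : Dyad V ≃ Dyad V where
  toFun := dyadPerm π
  invFun := dyadPerm π⁻¹
  left_inv d := by rw [dyadPerm_mul, inv_mul_cancel, dyadPerm_one]
  right_inv d := by rw [dyadPerm_mul, mul_inv_cancel, dyadPerm_one]

lemma image_dyadPerm_image {V : Type*} [DecidableEq V] (τ σ : Equiv.Perm V)
    (C : Finset (Dyad V)) :
    (C.image (dyadPerm σ)).image (dyadPerm τ) = C.image (dyadPerm (τ * σ)) := by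
  rw [Finset.image_image]
  exact Finset.image_congr fun x _ => dyadPerm_mul τ σ x

lemma image_dyadPerm_one {V : Type*} [DecidableEq V] (C : Finset (Dyad V)) :
    C.image (dyadPerm 1) = C := by
  rw [Finset.image_congr (fun x _ => dyadPerm_one x)]
  exact Finset.image_id

/-- The atom event: the network equals exactly the graph with edge set `C`. -/
def atomSet (X : Dyad V → Ω → Bool) (C : Finset (Dyad V)) : Set Ω :=
  {ω | ∀ d : Dyad V, X d ω = true ↔ d ∈ C}

lemma atomSet_measurable (X : Dyad V → Ω → Bool) (h : ∀ d, Measurable (X d))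
    (C : Finset (Dyad V)) : MeasurableSet (atomSet X C) := by
  have : atomSet X C = ⋂ d : Dyad V, (X d) ⁻¹' {b | b = true ↔ d ∈ C} := by
    ext ω; simp [atomSet, Set.mem_iInter]
  rw [this]
  exact MeasurableSet.iInter fun d => (h d) ((Set.toFinite _).measurableSet)

lemma atomSet_disjoint (X : Dyad V → Ω → Bool) {C C' : Finset (Dyad V)} (h : C ≠ C') :
    Disjoint (atomSet X C) (atomSet X C') := by
  rw [Set.disjoint_left]
  intro ω h1 h2
  apply h
  ext d
  rw [← h1 d, ← h2 d]

lemma z_eq_sum (μ : Measure Ω) (X : Dyad V → Ω → Bool) (hm : ∀ d, Measurable (X d))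
    (B : Finset (Dyad V)) :
    μ {ω | ∀ d ∈ B, X d ω = true}
      = ∑ C ∈ Finset.univ.filter (fun C => B ⊆ C), μ (atomSet X C) := by
  rw [← measure_biUnion_finset ?_ (fun C _ => atomSet_measurable X hm C)]
  · congr 1
    ext ω
    simp only [Set.mem_iUnion, Finset.mem_filter, Finset.mem_univ, true_and, atomSet,
      Set.mem_setOf_eq]
    constructor
    · intro h
      refine ⟨Finset.univ.filter (fun d => X d ω = true), fun d hd => ?_, fun d => ?_⟩
      · simp [h d hd]
      · simp
    · rintro ⟨C, hBC, hC⟩ d hd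
      exact (hC d).mpr (hBC hd)
  · intro C _ C' _ hne
    exact atomSet_disjoint X hne

lemma dyadPerm_injective {V : Type*} (π : Equiv.Perm V) :
    Function.Injective (dyadPerm (V := V) π) :=
  (dyadEquiv π).injective

lemma atom_invariant (μ : Measure Ω) (X : Dyad V → Ω → Bool) (hexch : IsExchangeable μ X)
    (π : Equiv.Perm V) (C : Finset (Dyad V)) :
    μ (atomSet X (C.image (dyadPerm π))) = μ (atomSet X C) := by
  have key := hexch π (fun d => decide (d ∈ C))
  have h1 : {ω | ∀ d : Dyad V, X (dyadPerm π d) ω = decide (d ∈ C)}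
      = atomSet X (C.image (dyadPerm π)) := by
    ext ω
    simp only [atomSet, Set.mem_setOf_eq]
    constructor
    · intro h d
      have hd : dyadPerm π (dyadPerm π⁻¹ d) = d := by
        rw [dyadPerm_mul, mul_inv_cancel, dyadPerm_one]
      have h1 := h (dyadPerm π⁻¹ d)
      rw [hd] at h1
      have hmem : d ∈ C.image (dyadPerm π) ↔ dyadPerm π⁻¹ d ∈ C := by
        simp only [Finset.mem_image]
        constructor
        · rintro ⟨c, hc, rfl⟩
          rwa [dyadPerm_mul, inv_mul_cancel, dyadPerm_one]
        · intro hc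
          exact ⟨_, hc, hd⟩
      rw [hmem, h1]
      simp
    · intro h d
      have hiff := h (dyadPerm π d)
      have hmem : dyadPerm π d ∈ C.image (dyadPerm π) ↔ d ∈ C := by
        simp only [Finset.mem_image]
        constructor
        · rintro ⟨c, hc, hceq⟩
          rw [← dyadPerm_injective π hceq]
          exact hc
        · intro hd
          exact ⟨d, hd, rfl⟩
      rw [hmem] at hiff
      cases hx : X (dyadPerm π d) ω <;> by_cases hd : d ∈ C <;> simp_all
  have h2 : {ω | ∀ d : Dyad V, X d ω = decide (d ∈ C)} = atomSet X C := by
    ext ω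
    simp only [atomSet, Set.mem_setOf_eq]
    refine forall_congr' fun d => ?_
    cases hx : X d ω <;> by_cases hd : d ∈ C <;> simp_all
  rw [h1, h2] at key
  exact key

lemma z_invariant (μ : Measure Ω) (X : Dyad V → Ω → Bool) (hm : ∀ d, Measurable (X d))
    (hexch : IsExchangeable μ X) (π : Equiv.Perm V) (B : Finset (Dyad V)) :
    μ {ω | ∀ d ∈ B.image (dyadPerm π), X d ω = true} = μ {ω | ∀ d ∈ B, X d ω = true} := by
  rw [z_eq_sum μ X hm, z_eq_sum μ X hm]
  refine Finset.sum_bij' (fun C _ => C.image (dyadPerm π⁻¹)) (fun C _ => C.image (dyadPerm π))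
    ?_ ?_ ?_ ?_ ?_
  · intro C hC
    simp only [Finset.mem_filter, Finset.mem_univ, true_and] at hC ⊢
    have := Finset.image_subset_image (f := dyadPerm π⁻¹) hC
    rwa [image_dyadPerm_image, inv_mul_cancel, image_dyadPerm_one] at this
  · intro C hC
    simp only [Finset.mem_filter, Finset.mem_univ, true_and] at hC ⊢
    exact Finset.image_subset_image hC
  · intro C _
    simp only [image_dyadPerm_image, mul_inv_cancel, image_dyadPerm_one]
  · intro C _
    simp only [image_dyadPerm_image, inv_mul_cancel, image_dyadPerm_one]
  · intro C _
    have := atom_invariant μ X hexch π (C.image (dyadPerm π⁻¹))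
    rw [image_dyadPerm_image, mul_inv_cancel, image_dyadPerm_one] at this
    exact this

lemma alt_sum {ι : Type*} [Fintype ι] [DecidableEq ι] (A C : Finset ι) :
    ∑ B ∈ Finset.univ.filter (fun B => A ⊆ B ∧ B ⊆ C), (-1 : ℝ) ^ (B.card - A.card)
      = if C = A then 1 else 0 := by
  by_cases hAC : A ⊆ C
  · have : ∑ B ∈ Finset.univ.filter (fun B => A ⊆ B ∧ B ⊆ C),
        (-1 : ℝ) ^ (B.card - A.card) = ∑ T ∈ (C \ A).powerset, (-1 : ℝ) ^ T.card := by
      refine Finset.sum_bij' (fun B _ => B \ A) (fun T _ => A ∪ T) ?_ ?_ ?_ ?_ ?_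
      · intro B hB
        simp only [Finset.mem_filter, Finset.mem_univ, true_and] at hB
        rw [Finset.mem_powerset]
        exact Finset.sdiff_subset_sdiff hB.2 (le_refl A)
      · intro T hT
        rw [Finset.mem_powerset] at hT
        simp only [Finset.mem_filter, Finset.mem_univ, true_and]
        refine ⟨Finset.subset_union_left, Finset.union_subset hAC ?_⟩
        exact hT.trans (Finset.sdiff_subset)
      · intro B hB
        simp only [Finset.mem_filter, Finset.mem_univ, true_and] at hB
        exact Finset.union_sdiff_of_subset hB.1
      · intro T hT
        rw [Finset.mem_powerset] at hT
        exact Finset.union_sdiff_cancel_left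
          (Finset.disjoint_of_subset_right hT Finset.disjoint_sdiff)
      · intro B hB
        simp only [Finset.mem_filter, Finset.mem_univ, true_and] at hB
        rw [Finset.card_sdiff_of_subset hB.1]
    have hcast : ∑ T ∈ (C \ A).powerset, (-1 : ℝ) ^ T.card
        = ((∑ T ∈ (C \ A).powerset, (-1 : ℤ) ^ T.card : ℤ) : ℝ) := by
      push_cast
      rfl
    rw [this, hcast, Finset.sum_powerset_neg_one_pow_card]
    have hiff : C \ A = ∅ ↔ C = A := by
      rw [Finset.sdiff_eq_empty_iff_subset]
      constructor
      · exact fun h => Finset.Subset.antisymm h hAC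
      · exact fun h => h.le
    by_cases h : C = A
    · rw [if_pos (hiff.mpr h), if_pos h]
      norm_num
    · rw [if_neg (fun he => h (hiff.mp he)), if_neg h]
      norm_num
  · have hemp : Finset.univ.filter (fun B => A ⊆ B ∧ B ⊆ C) = ∅ := by
      rw [Finset.filter_eq_empty_iff]
      rintro B _ ⟨h1, h2⟩
      exact hAC (h1.trans h2)
    rw [hemp, Finset.sum_empty, if_neg]
    intro h
    exact hAC (le_of_eq h.symm)

lemma mobius (μ : Measure Ω) [IsProbabilityMeasure μ] (X : Dyad V → Ω → Bool)
    (hm : ∀ d, Measurable (X d)) (A : Finset (Dyad V)) :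
    (μ (atomSet X A)).toReal
      = ∑ B ∈ Finset.univ.filter (fun B => A ⊆ B),
          (-1 : ℝ) ^ (B.card - A.card) * (μ {ω | ∀ d ∈ B, X d ω = true}).toReal := by
  have hz : ∀ B : Finset (Dyad V), (μ {ω | ∀ d ∈ B, X d ω = true}).toReal
      = ∑ C ∈ Finset.univ.filter (fun C => B ⊆ C), (μ (atomSet X C)).toReal := by
    intro B
    rw [z_eq_sum μ X hm B, ENNReal.toReal_sum (fun C _ => measure_ne_top μ _)]
  calc (μ (atomSet X A)).toReal
      = ∑ C : Finset (Dyad V), (μ (atomSet X C)).toReal * (if C = A then 1 else 0) := by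
        rw [Finset.sum_congr rfl (fun C _ => by rw [mul_ite, mul_one, mul_zero]),
          Finset.sum_ite_eq' Finset.univ A (fun C => (μ (atomSet X C)).toReal),
          if_pos (Finset.mem_univ A)]
    _ = ∑ C : Finset (Dyad V), (μ (atomSet X C)).toReal *
          ∑ B ∈ Finset.univ.filter (fun B => A ⊆ B ∧ B ⊆ C), (-1 : ℝ) ^ (B.card - A.card) := by
        refine Finset.sum_congr rfl fun C _ => ?_
        rw [alt_sum A C]
    _ = ∑ C : Finset (Dyad V), ∑ B : Finset (Dyad V),
          (if A ⊆ B ∧ B ⊆ C then (-1 : ℝ) ^ (B.card - A.card) * (μ (atomSet X C)).toReal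
            else 0) := by
        refine Finset.sum_congr rfl fun C _ => ?_
        rw [Finset.mul_sum, Finset.sum_filter]
        refine Finset.sum_congr rfl fun B _ => ?_
        split <;> ring
    _ = ∑ B : Finset (Dyad V), ∑ C : Finset (Dyad V),
          (if A ⊆ B ∧ B ⊆ C then (-1 : ℝ) ^ (B.card - A.card) * (μ (atomSet X C)).toReal
            else 0) := Finset.sum_comm
    _ = ∑ B ∈ Finset.univ.filter (fun B => A ⊆ B),
          (-1 : ℝ) ^ (B.card - A.card) * (μ {ω | ∀ d ∈ B, X d ω = true}).toReal := by
        rw [Finset.sum_filter]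
        refine Finset.sum_congr rfl fun B _ => ?_
        by_cases hAB : A ⊆ B
        · rw [if_pos hAB, hz B, Finset.mul_sum, Finset.sum_filter]
          refine Finset.sum_congr rfl fun C _ => ?_
          simp only [hAB, true_and]
        · simp [hAB]
    
end Aux

/-- For an exchangeable random network `X` on a finite node set and a
graph `x` on that node set (identified with its edge set `A`),
`P(X = x) = Σ_U (−1)^{|U|−|x|} r_U(x) z_U`, the sum running over all isomorphism
classes `U` of graphs on `N`, where `z_U = P(B ⊆ X)` for any representative `B` of
the class `U`. -/
theorem stmt15 {V Ω : Type*} [Fintype V] [DecidableEq V] [MeasurableSpace Ω]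
    (μ : Measure Ω) [IsProbabilityMeasure μ] (X : Dyad V → Ω → Bool)
    (hmeas : ∀ d : Dyad V, Measurable (X d))
    (hexch : IsExchangeable μ X) (A : Finset (Dyad V)) :
    (μ {ω | ∀ d : Dyad V, X d ω = true ↔ d ∈ A}).toReal
      = ∑ U : IsoClass V,
          (-1 : ℝ) ^ (U.out.card - A.card) * (rCount U A : ℝ) *
            (μ {ω | ∀ d ∈ U.out, X d ω = true}).toReal := by
  have hA : {ω | ∀ d : Dyad V, X d ω = true ↔ d ∈ A} = atomSet X A := rfl
  rw [hA, mobius μ X hmeas A]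
  rw [← Finset.sum_fiberwise (Finset.univ.filter (fun B => A ⊆ B))
    (fun B => Quotient.mk (isoSetoid V) B)
    (fun B => (-1 : ℝ) ^ (B.card - A.card) * (μ {ω | ∀ d ∈ B, X d ω = true}).toReal)]
  refine Finset.sum_congr rfl fun U _ => ?_
  have hconst : ∀ B ∈ (Finset.univ.filter (fun B => A ⊆ B)).filter
      (fun B => Quotient.mk (isoSetoid V) B = U),
      (-1 : ℝ) ^ (B.card - A.card) * (μ {ω | ∀ d ∈ B, X d ω = true}).toReal
        = (-1 : ℝ) ^ (U.out.card - A.card) * (μ {ω | ∀ d ∈ U.out, X d ω = true}).toReal := by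
    intro B hB
    simp only [Finset.mem_filter, Finset.mem_univ, true_and] at hB
    have hequiv : (isoSetoid V).r B U.out := Quotient.exact (by rw [hB.2, Quotient.out_eq])
    obtain ⟨π, hπ⟩ := hequiv
    have hcard : U.out.card = B.card := by
      rw [← hπ, Finset.card_image_of_injective _ (dyadPerm_injective π)]
    have hmeasure : μ {ω | ∀ d ∈ U.out, X d ω = true} = μ {ω | ∀ d ∈ B, X d ω = true} := by
      rw [← hπ]
      exact z_invariant μ X hmeas hexch π B
    rw [hcard, hmeasure]
  rw [Finset.sum_congr rfl hconst, Finset.sum_const]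
  have hcount : ((Finset.univ.filter (fun B => A ⊆ B)).filter
      (fun B => Quotient.mk (isoSetoid V) B = U)).card = rCount U A := by
    rw [rCount, Nat.card_eq_fintype_card, Fintype.card_subtype, Finset.filter_filter]
    congr 1
    exact Finset.filter_congr fun B _ => by tauto
  rw [hcount, nsmul_eq_mul]
  ring
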